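/- Forward–backward algorithm for the comixture problem: let f : H → ℝ be convex, differentiable on H with β-Lipschitzian gradient, where β ∈ (0,2), set h = comix(L_k,g_k)_{1≤k≤p}, and suppose the problem of minimizing f + h over H has a solution. Let x₀ ∈ H and iterate for n = 0,1,…: y_n = x_n − ∇f(x_n); x_{n+1} = y_n + ∑_{k=1}^p α_k L_k*(prox_{g_k}(L_k y_n) − L_k y_n). Then (x_n)_{n∈ℕ} converges weakly to a minimizer of f + h over H. -/

import Mathlib

open scoped RealInnerProductSpace
open Filter

noncomputable section

variable {K : Type*} [NormedAddCommGroup K] [InnerProductSpace ℝ K]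

/-- Normalized quadratic kernel `Q_K = ‖·‖²/2` (as an extended real). -/
def QK (x : K) : EReal := ((‖x‖ ^ 2 / 2 : ℝ) : EReal)

/-- Fenchel conjugate `f* : u ↦ sup_x (⟨x,u⟩ − f(x))`. -/
def fconj (f : K → EReal) (u : K) : EReal := ⨆ x : K, ((⟪x, u⟫ : ℝ) : EReal) - f x

/-- Moreau envelope `f □ Q_K : x ↦ inf_z (f(z) + ‖x−z‖²/2)`. -/
def menv (f : K → EReal) (x : K) : EReal := ⨅ z : K, f z + QK (x - z)

/-- Convexity of an extended-real-valued function. -/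
def ConvexFnE (f : K → EReal) : Prop :=
  ∀ x y : K, ∀ a b : ℝ, 0 ≤ a → 0 ≤ b → a + b = 1 →
    f (a • x + b • y) ≤ (a : EReal) * f x + (b : EReal) * f y

/-- Properness: nowhere `−∞` and somewhere finite. -/
def ProperFn (f : K → EReal) : Prop := (∀ x, f x ≠ ⊥) ∧ ∃ x, f x ≠ ⊤

/-- The class `Γ₀(K)` of proper lower semicontinuous convex functions. -/
def Gamma0 (f : K → EReal) : Prop := ProperFn f ∧ LowerSemicontinuous f ∧ ConvexFnE f

/-- `P` is the proximity operator of `g`: for every `x`, `P x` is the unique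
minimizer of `z ↦ g(z) + ‖x−z‖²/2`. -/
def IsProx (g : K → EReal) (P : K → K) : Prop :=
  ∀ x : K,
    (∀ z : K, g (P x) + QK (x - P x) ≤ g z + QK (x - z)) ∧
    (∀ z : K, (∀ w : K, g z + QK (x - z) ≤ g w + QK (x - w)) → z = P x)

/-- The convex subdifferential of `f` at `x`. -/
def subdiff (f : K → EReal) (x : K) : Set K :=
  {u : K | ∀ z : K, ((⟪z - x, u⟫ : ℝ) : EReal) + f x ≤ f z}

variable {H : Type*} [NormedAddCommGroup H] [InnerProductSpace ℝ H]
  {p : ℕ} {G : Fin p → Type*} [∀ k, NormedAddCommGroup (G k)]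
  [∀ k, InnerProductSpace ℝ (G k)]

/-- The proximal comixture `comix(L_k, g_k)_{1≤k≤p}
  = ((∑_k α_k (g_k □ Q_{G_k}) ∘ L_k)* − Q_H)*`. -/
def comix (L : ∀ k, H →L[ℝ] G k) (g : ∀ k, (G k) → EReal) (α : Fin p → ℝ) :
    H → EReal :=
  fconj (fun u => fconj (fun x => ∑ k, (α k : EReal) * menv (g k) (L k x)) u - QK u)


/-!
Write `φ = ∑ α_k (g_k □ Q) ∘ L_k`. Each envelope `g_k □ Q` is convex with the `1`-Lipschitz
gradient `Id - prox_{g_k}`, hence so is `φ`, with gradient `D = ∑ α_k L_k* (Id - prox_{g_k}) L_k`,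
and the comixture `h = (φ* - Q)*` has proximity operator `Id - D`. The iteration is therefore
`x_{n+1} = prox_h (x_n - ∇f x_n)`. By the Baillon–Haddad theorem `Id - ∇f` is averaged because
`β < 2`, and `prox_h` is firmly nonexpansive, so their composition is averaged; its fixed points are
the minimizers of `f + h` (Fermat's rule), and the Krasnosel'skiĭ–Mann argument gives weak
convergence of the iterates to one of them.
-/

open Topology

section Averaged

variable {E : Type*} [NormedAddCommGroup E]

/-- `T` is `θ`-averaged in the usual sense iff `Averaged ((1 - θ) / θ) T`; `Averaged 1` is firm
nonexpansiveness. -/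
def Averaged (κ : ℝ) (T : E → E) : Prop :=
  ∀ a b, ‖T a - T b‖ ^ 2 + κ * ‖(a - T a) - (b - T b)‖ ^ 2 ≤ ‖a - b‖ ^ 2

lemma Averaged.norm_sub_le {κ : ℝ} {T : E → E} (hT : Averaged κ T) (hκ : 0 ≤ κ) (a b : E) :
    ‖T a - T b‖ ≤ ‖a - b‖ := by
  have h := hT a b
  have : ‖T a - T b‖ ^ 2 ≤ ‖a - b‖ ^ 2 := by nlinarith [sq_nonneg ‖(a - T a) - (b - T b)‖]
  exact pow_le_pow_iff_left₀ (norm_nonneg _) (norm_nonneg _) two_ne_zero |>.mp this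

variable [InnerProductSpace ℝ E]

def Cocoercive (c : ℝ) (B : E → E) : Prop :=
  ∀ a b, c * ‖B a - B b‖ ^ 2 ≤ ⟪B a - B b, a - b⟫

lemma Cocoercive.averaged_id_sub {c : ℝ} {B : E → E} (hB : Cocoercive c B) :
    Averaged (2 * c - 1) (fun x => x - B x) := by
  intro a b
  have h := hB a b
  rw [show a - (a - B a) - (b - (b - B b)) = B a - B b by abel,
    show a - B a - (b - B b) = (a - b) - (B a - B b) by abel, norm_sub_sq_real,
    real_inner_comm]
  linarith

lemma Averaged.comp {s t : ℝ} {S T : E → E} (hS : Averaged s S) (hT : Averaged t T)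
    (hs : 0 < s) (ht : 0 < t) : Averaged (s * t / (s + t)) (T ∘ S) := by
  intro a b
  set e₁ := (a - S a) - (b - S b)
  set e₂ := (S a - T (S a)) - (S b - T (S b))
  have hsum : (a - T (S a)) - (b - T (S b)) = e₁ + e₂ := by simp only [e₁, e₂]; abel
  -- `(s + t) (s‖e₁‖² + t‖e₂‖²) - s t ‖e₁ + e₂‖² = ‖s e₁ - t e₂‖²`
  have hmix : s * t * ‖e₁ + e₂‖ ^ 2 ≤ (s + t) * (s * ‖e₁‖ ^ 2 + t * ‖e₂‖ ^ 2) := by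
    have h := sq_nonneg ‖s • e₁ - t • e₂‖
    rw [norm_sub_sq_real, norm_smul, norm_smul, real_inner_smul_left, real_inner_smul_right,
      Real.norm_of_nonneg hs.le, Real.norm_of_nonneg ht.le] at h
    rw [norm_add_sq_real]
    nlinarith
  have hκ : s * t / (s + t) * ‖e₁ + e₂‖ ^ 2 ≤ s * ‖e₁‖ ^ 2 + t * ‖e₂‖ ^ 2 := by
    rw [div_mul_eq_mul_div, div_le_iff₀ (by positivity)]
    linarith
  have h₁ := hS a b
  have h₂ := hT (S a) (S b)
  simp only [Function.comp_apply, hsum]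
  linarith

end Averaged

section Smoothness

variable {E F : Type*} [NormedAddCommGroup E] [InnerProductSpace ℝ E]
  [NormedAddCommGroup F] [InnerProductSpace ℝ F]

/-- `φ` is convex and `β`-smooth with gradient `D`, in the form of the two first-order bounds. -/
def SmoothConvex (β : ℝ) (φ : E → ℝ) (D : E → E) : Prop :=
  ∀ a b, φ a + ⟪D a, b - a⟫ ≤ φ b ∧ φ b ≤ φ a + ⟪D a, b - a⟫ + β / 2 * ‖b - a‖ ^ 2

namespace SmoothConvex

variable {β : ℝ} {φ : E → ℝ} {D : E → E}

lemma add_inner_add_sq_le (h : SmoothConvex β φ D) (hβ : 0 < β) (a b : E) :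
    φ a + ⟪D a, b - a⟫ + 1 / (2 * β) * ‖D b - D a‖ ^ 2 ≤ φ b := by
  -- compare both bounds at the point `b - β⁻¹ (D b - D a)`
  set z := b - β⁻¹ • (D b - D a)
  have hup := (h b z).2
  have hlow := (h a z).1
  have hzb : z - b = -(β⁻¹ • (D b - D a)) := by simp only [z]; abel
  have hza : z - a = (b - a) - β⁻¹ • (D b - D a) := by simp only [z]; abel
  rw [hzb, norm_neg, norm_smul, inner_neg_right, real_inner_smul_right,
    Real.norm_of_nonneg (inv_nonneg.2 hβ.le)] at hup
  rw [hza, inner_sub_right, real_inner_smul_right] at hlow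
  have hd : β⁻¹ * ⟪D b, D b - D a⟫ - β⁻¹ * ⟪D a, D b - D a⟫ = β⁻¹ * ‖D b - D a‖ ^ 2 := by
    rw [← mul_sub, ← inner_sub_left, real_inner_self_eq_norm_sq]
  have e₁ : β / 2 * (β⁻¹ * ‖D b - D a‖) ^ 2 = 1 / (2 * β) * ‖D b - D a‖ ^ 2 := by
    field_simp
  have e₂ : β⁻¹ * ‖D b - D a‖ ^ 2 = 2 * (1 / (2 * β) * ‖D b - D a‖ ^ 2) := by
    field_simp
  linarith

/-- Baillon–Haddad. -/
lemma cocoercive (h : SmoothConvex β φ D) (hβ : 0 < β) : Cocoercive β⁻¹ D := by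
  intro a b
  have hab := h.add_inner_add_sq_le hβ a b
  have hba := h.add_inner_add_sq_le hβ b a
  rw [norm_sub_rev] at hba
  have e₁ : ⟪D a - D b, a - b⟫ = -⟪D a, b - a⟫ - ⟪D b, a - b⟫ := by
    rw [inner_sub_left, ← inner_neg_right, neg_sub]
  have e₂ : β⁻¹ = 2 * (1 / (2 * β)) := by field_simp
  rw [e₁, e₂, norm_sub_rev]
  linarith

lemma comp_clm [CompleteSpace E] [CompleteSpace F] {φ : F → ℝ} {D : F → F}
    (h : SmoothConvex β φ D) (hβ : 0 ≤ β) {L : E →L[ℝ] F} (hL : ‖L‖ ≤ 1) :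
    SmoothConvex β (fun x => φ (L x)) (fun x => ContinuousLinearMap.adjoint L (D (L x))) := by
  intro a b
  have hLn : ‖L (b - a)‖ ^ 2 ≤ ‖b - a‖ ^ 2 := by
    gcongr
    exact (L.le_opNorm _).trans (mul_le_of_le_one_left (norm_nonneg _) hL)
  rw [ContinuousLinearMap.adjoint_inner_left, map_sub]
  refine ⟨(h (L a) (L b)).1, (h (L a) (L b)).2.trans ?_⟩
  rw [← map_sub]
  gcongr

lemma sum {ι : Type*} (s : Finset ι) {c : ι → ℝ} (hc : ∀ k ∈ s, 0 ≤ c k) {φ : ι → E → ℝ}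
    {D : ι → E → E} (h : ∀ k ∈ s, SmoothConvex β (φ k) (D k)) :
    SmoothConvex (β * ∑ k ∈ s, c k) (fun x => ∑ k ∈ s, c k * φ k x)
      (fun x => ∑ k ∈ s, c k • D k x) := by
  intro a b
  have hinner : ⟪∑ k ∈ s, c k • D k a, b - a⟫ = ∑ k ∈ s, c k * ⟪D k a, b - a⟫ := by
    simp only [sum_inner, real_inner_smul_left]
  rw [hinner]
  constructor
  · rw [← Finset.sum_add_distrib]
    refine Finset.sum_le_sum fun k hk => ?_
    rw [← mul_add]
    exact mul_le_mul_of_nonneg_left (h k hk a b).1 (hc k hk)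
  · calc ∑ k ∈ s, c k * φ k b
        ≤ ∑ k ∈ s, c k * (φ k a + ⟪D k a, b - a⟫ + β / 2 * ‖b - a‖ ^ 2) :=
          Finset.sum_le_sum fun k hk => mul_le_mul_of_nonneg_left (h k hk a b).2 (hc k hk)
      _ = _ := by
          simp only [mul_add, Finset.sum_add_distrib, ← Finset.sum_mul]
          ring

end SmoothConvex

end Smoothness

section Gradient

variable {E : Type*} [NormedAddCommGroup E] [InnerProductSpace ℝ E] [CompleteSpace E]
  {f : E → ℝ} {f' : E → E}

lemma HasGradientAt.hasDerivAt_comp_line {g a d : E} {t : ℝ} (hf : HasGradientAt f g (a + t • d)) :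
    HasDerivAt (fun s : ℝ => f (a + s • d)) ⟪g, d⟫ t := by
  have hline : HasDerivAt (fun s : ℝ => a + s • d) d t := by
    simpa using ((hasDerivAt_id t).smul_const d).const_add a
  have h := hf.hasFDerivAt.comp_hasDerivAt t hline
  simp only [InnerProductSpace.toDual_apply_apply] at h
  exact h

lemma ConvexOn.add_inner_le (hf : ConvexOn ℝ Set.univ f) {a g : E} (hgrad : HasGradientAt f g a)
    (b : E) : f a + ⟪g, b - a⟫ ≤ f b := by
  have hline : ConvexOn ℝ Set.univ (fun t : ℝ => f (a + t • (b - a))) := by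
    simpa [Function.comp_def, AffineMap.lineMap_apply, add_comm] using
      hf.comp_affineMap (AffineMap.lineMap a b)
  have hderiv := (show HasGradientAt f g (a + (0 : ℝ) • (b - a)) by simpa using hgrad)
    |>.hasDerivAt_comp_line
  have := hline.le_slope_of_hasDerivAt (Set.mem_univ 0) (Set.mem_univ 1) zero_lt_one hderiv
  simp only [slope_def_field, one_smul, add_sub_cancel, zero_smul, add_zero, sub_zero,
    div_one] at this
  linarith

lemma le_add_inner_add_sq_of_lipschitz (hf : ∀ x, HasGradientAt f (f' x) x) {β : ℝ}
    (hlip : ∀ x y, ‖f' x - f' y‖ ≤ β * ‖x - y‖) (a b : E) :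
    f b ≤ f a + ⟪f' a, b - a⟫ + β / 2 * ‖b - a‖ ^ 2 := by
  set d := b - a
  set w : ℝ → ℝ := fun t => f (a + t • d) - β / 2 * ‖d‖ ^ 2 * t ^ 2
  have hw : ∀ t, HasDerivAt w (⟪f' (a + t • d), d⟫ - β * ‖d‖ ^ 2 * t) t := fun t =>
    ((hf _).hasDerivAt_comp_line.sub ((hasDerivAt_pow 2 t).const_mul (β / 2 * ‖d‖ ^ 2)))
      |>.congr_deriv (by ring)
  obtain ⟨c, hc, hslope⟩ := exists_hasDerivAt_eq_slope w _ zero_lt_one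
    (fun t _ => (hw t).continuousAt.continuousWithinAt) (fun t _ => hw t)
  have hgrowth : ⟪f' (a + c • d) - f' a, d⟫ ≤ β * ‖d‖ ^ 2 * c := by
    calc ⟪f' (a + c • d) - f' a, d⟫ ≤ ‖f' (a + c • d) - f' a‖ * ‖d‖ := real_inner_le_norm _ _
      _ ≤ β * ‖c • d‖ * ‖d‖ := by gcongr; simpa using hlip (a + c • d) a
      _ = β * ‖d‖ ^ 2 * c := by rw [norm_smul, Real.norm_of_nonneg hc.1.le]; ring
  rw [inner_sub_left] at hgrowth
  simp only [w, zero_smul, add_zero, one_smul, sub_zero, div_one, d, add_sub_cancel, one_pow,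
    mul_one, ne_eq, OfNat.ofNat_ne_zero, not_false_eq_true, zero_pow, mul_zero] at hslope
  linarith

lemma SmoothConvex.of_convexOn (hconv : ConvexOn ℝ Set.univ f) (hf : ∀ x, HasGradientAt f (f' x) x)
    {β : ℝ} (hlip : ∀ x y, ‖f' x - f' y‖ ≤ β * ‖x - y‖) : SmoothConvex β f f' :=
  fun a b => ⟨hconv.add_inner_le (hf a) b, le_add_inner_add_sq_of_lipschitz hf hlip a b⟩

end Gradient

lemma EReal.coe_finset_sum {ι : Type*} (s : Finset ι) (f : ι → ℝ) :
    ((∑ i ∈ s, f i : ℝ) : EReal) = ∑ i ∈ s, (f i : EReal) :=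
  map_sum (⟨⟨Real.toEReal, EReal.coe_zero⟩, EReal.coe_add⟩ : ℝ →+ EReal) f s

section Conjugate

variable {E : Type*} [NormedAddCommGroup E] [InnerProductSpace ℝ E]

lemma fconj_eq_of_mem_subdiff {F : E → EReal} {x u : E} {m : ℝ} (hFx : F x = m)
    (hu : u ∈ subdiff F x) : fconj F u = ((⟪x, u⟫ - m : ℝ) : EReal) := by
  refine le_antisymm (iSup_le fun z => ?_) (le_iSup_of_le x (by rw [hFx, EReal.coe_sub]))
  have hz := hu z
  rw [hFx, ← EReal.coe_add] at hz
  calc ((⟪z, u⟫ : ℝ) : EReal) - F z ≤ ((⟪z, u⟫ : ℝ) : EReal) - ((⟪z - x, u⟫ + m : ℝ) : EReal) :=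
        EReal.sub_le_sub le_rfl hz
    _ = ((⟪x, u⟫ - m : ℝ) : EReal) := by rw [← EReal.coe_sub, inner_sub_left]; ring_nf

lemma mem_subdiff_fconj {F : E → EReal} {x u : E} {m : ℝ} (hFx : F x = m)
    (hu : u ∈ subdiff F x) : x ∈ subdiff (fconj F) u := by
  intro v
  rw [fconj_eq_of_mem_subdiff hFx hu, ← EReal.coe_add]
  refine le_iSup_of_le x (le_of_eq ?_)
  rw [hFx, ← EReal.coe_sub, inner_sub_left, real_inner_comm x v, real_inner_comm x u]
  ring_nf

lemma convexFnE_fconj (F : E → EReal) : ConvexFnE (fconj F) := by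
  intro x y a b ha hb hab
  refine iSup_le fun v => ?_
  induction hF : F v using EReal.rec with
  | bot =>
    have htop : ∀ z, fconj F z = ⊤ := fun z =>
      top_le_iff.mp (le_iSup_of_le v (by rw [hF, EReal.coe_sub_bot]))
    rw [htop, htop]
    rcases ha.lt_or_eq with ha | rfl
    · rw [EReal.coe_mul_top_of_pos ha, EReal.top_add_of_ne_bot]
      exacts [le_top, ((mul_nonneg (EReal.coe_nonneg.2 hb) le_top).trans_lt' EReal.bot_lt_zero).ne']
    · obtain rfl : b = 1 := by linarith
      simp
  | coe m =>
    have hx : ((⟪v, x⟫ - m : ℝ) : EReal) ≤ fconj F x := le_iSup_of_le v (by rw [hF, EReal.coe_sub])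
    have hy : ((⟪v, y⟫ - m : ℝ) : EReal) ≤ fconj F y := le_iSup_of_le v (by rw [hF, EReal.coe_sub])
    calc ((⟪v, a • x + b • y⟫ : ℝ) : EReal) - m
        = (a : EReal) * ((⟪v, x⟫ - m : ℝ) : EReal) + (b : EReal) * ((⟪v, y⟫ - m : ℝ) : EReal) := by
          rw [← EReal.coe_sub, ← EReal.coe_mul, ← EReal.coe_mul, ← EReal.coe_add, inner_add_right,
            real_inner_smul_right, real_inner_smul_right]
          congr 1
          linear_combination m * hab
      _ ≤ a * fconj F x + b * fconj F y :=
          add_le_add (mul_le_mul_of_nonneg_left hx (EReal.coe_nonneg.2 ha))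
            (mul_le_mul_of_nonneg_left hy (EReal.coe_nonneg.2 hb))
  | top => simp

lemma subdiff_monotone {h : E → EReal} {a b u v : E} {r : ℝ} (ha : h a = r)
    (hu : u ∈ subdiff h a) (hv : v ∈ subdiff h b) : 0 ≤ ⟪u - v, a - b⟫ := by
  have hab := hu b
  have hba := hv a
  rw [ha] at hab hba
  induction hb : h b using EReal.rec with
  | bot => rw [hb, ← EReal.coe_add] at hab; exact absurd hab (by simp)
  | top => rw [hb, EReal.coe_add_top] at hba; exact absurd hba (by simp)
  | coe s =>
    rw [hb, ← EReal.coe_add, EReal.coe_le_coe_iff] at hab hba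
    have key : ⟪u - v, a - b⟫ = -(⟪b - a, u⟫ + ⟪a - b, v⟫) := by
      rw [inner_sub_left, inner_sub_left, inner_sub_left, inner_sub_right, inner_sub_right,
        real_inner_comm a u, real_inner_comm b u, real_inner_comm a v, real_inner_comm b v]
      ring
    linarith

end Conjugate

section Fermat

variable {E : Type*} [NormedAddCommGroup E] [InnerProductSpace ℝ E] [CompleteSpace E]
  {f : E → ℝ} {h : E → EReal} {g z : E}

lemma nonneg_of_hasDerivAt_of_isMinOn {u : ℝ → ℝ} {u' : ℝ} (hu : HasDerivAt u u' 0)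
    (hmin : IsMinOn u (Set.Icc 0 1) 0) : 0 ≤ u' := by
  have hcone : (1 : ℝ) ∈ posTangentConeAt (Set.Icc 0 1) 0 :=
    mem_posTangentConeAt_of_segment_subset (by simp [segment_eq_Icc])
  simpa using (hmin.localize.hasFDerivWithinAt_nonneg hu.hasFDerivAt.hasFDerivWithinAt hcone)

lemma neg_mem_subdiff_of_isMin_add (hh : ConvexFnE h) (hf : HasGradientAt f g z)
    (hmin : ∀ w, (f z : EReal) + h z ≤ f w + h w) : -g ∈ subdiff h z := by
  intro w
  induction hz : h z using EReal.rec with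
  | bot => simp
  | top =>
    have hw := hmin w
    rw [hz, EReal.coe_add_top, top_le_iff] at hw
    have : h w = ⊤ := by
      by_contra hne
      exact (EReal.add_lt_top (EReal.coe_ne_top _) hne).ne hw
    rw [this]
    exact le_top
  | coe r =>
    induction hw : h w using EReal.rec with
    | bot => have := hmin w; rw [hz, hw, EReal.add_bot, ← EReal.coe_add] at this; simp at this
    | top => exact le_top
    | coe q =>
      -- on the segment `τ ↦ z + τ (w - z)`, convexity of `h` makes `z` minimize a smooth function
      set u : ℝ → ℝ := fun τ => f (z + τ • (w - z)) + τ * (q - r)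
      have hu : HasDerivAt u (⟪g, w - z⟫ + (q - r)) 0 :=
        ((show HasGradientAt f g (z + (0 : ℝ) • (w - z)) by simpa using hf).hasDerivAt_comp_line.add
          ((hasDerivAt_id (0 : ℝ)).mul_const (q - r))).congr_deriv (by ring)
      have hmin' : IsMinOn u (Set.Icc 0 1) 0 := fun τ hτ => by
        have hseg := hh z w (1 - τ) τ (by linarith [hτ.2]) hτ.1 (by ring)
        rw [hz, hw, ← EReal.coe_mul, ← EReal.coe_mul, ← EReal.coe_add] at hseg
        have hm := (hmin ((1 - τ) • z + τ • w)).trans (add_le_add le_rfl hseg)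
        rw [hz, ← EReal.coe_add, ← EReal.coe_add, EReal.coe_le_coe_iff] at hm
        have hpt : (1 - τ) • z + τ • w = z + τ • (w - z) := by module
        show u 0 ≤ u τ
        simp only [u, zero_smul, add_zero, zero_mul, ← hpt]
        nlinarith
      have := nonneg_of_hasDerivAt_of_isMinOn hu hmin'
      rw [← EReal.coe_add, EReal.coe_le_coe_iff, inner_neg_right, real_inner_comm]
      linarith

lemma isMin_add_of_neg_mem_subdiff (hf : ConvexOn ℝ Set.univ f) (hgrad : HasGradientAt f g z)
    (hz : -g ∈ subdiff h z) (w : E) : (f z : EReal) + h z ≤ f w + h w := by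
  induction hz' : h z using EReal.rec with
  | bot => simp
  | top =>
    have hw := hz w
    rw [hz', EReal.coe_add_top, top_le_iff] at hw
    rw [hw, EReal.coe_add_top, EReal.coe_add_top]
  | coe r =>
    calc (f z : EReal) + r ≤ ((f w : ℝ) : EReal) + ((⟪w - z, -g⟫ + r : ℝ) : EReal) := by
          rw [← EReal.coe_add, ← EReal.coe_add, EReal.coe_le_coe_iff, inner_neg_right,
            real_inner_comm]
          linarith [hf.add_inner_le hgrad w]
      _ ≤ f w + h w := add_le_add le_rfl (by rw [EReal.coe_add, ← hz']; exact hz w)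

end Fermat

section ForwardBackward

variable {E : Type*} [NormedAddCommGroup E] [InnerProductSpace ℝ E] [CompleteSpace E]

lemma forwardBackward_eq_self_iff {f : E → ℝ} {f' : E → E} {h : E → EReal} {T : E → E}
    (hfc : ConvexOn ℝ Set.univ f) (hf : ∀ x, HasGradientAt f (f' x) x) (hh : ConvexFnE h)
    (hTval : ∀ y, ∃ r : ℝ, h (T y) = r) (hTsub : ∀ y, y - T y ∈ subdiff h (T y)) (z : E) :
    T (z - f' z) = z ↔ ∀ w, (f z : EReal) + h z ≤ f w + h w := by
  constructor
  · intro hfix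
    have hsub := hTsub (z - f' z)
    rw [hfix, sub_sub_cancel_left] at hsub
    exact isMin_add_of_neg_mem_subdiff hfc (hf z) hsub
  · intro hmin
    obtain ⟨r, hr⟩ := hTval (z - f' z)
    have hmono := subdiff_monotone hr (hTsub (z - f' z))
      (neg_mem_subdiff_of_isMin_add hh (hf z) hmin)
    rw [show z - f' z - T (z - f' z) - -f' z = -(T (z - f' z) - z) by abel, inner_neg_left,
      real_inner_self_eq_norm_sq, neg_nonneg] at hmono
    exact sub_eq_zero.1 (norm_eq_zero.1 (pow_eq_zero_iff two_ne_zero |>.1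
      (le_antisymm hmono (sq_nonneg _))))

end ForwardBackward

section WeakConvergence

variable {E : Type*} [NormedAddCommGroup E]

lemma norm_le_of_antitone_norm_sub {x : ℕ → E} {c : E} (h : Antitone fun n => ‖x n - c‖) (n : ℕ) :
    ‖x n‖ ≤ ‖x 0 - c‖ + ‖c‖ :=
  calc ‖x n‖ = ‖(x n - c) + c‖ := by rw [sub_add_cancel]
    _ ≤ ‖x n - c‖ + ‖c‖ := norm_add_le _ _
    _ ≤ ‖x 0 - c‖ + ‖c‖ := by gcongr; exact h (Nat.zero_le n)

variable [InnerProductSpace ℝ E]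

/-- Demiclosedness of `Id - A` at `0`. -/
lemma eq_of_tendsto_inner_of_tendsto_sub {ι : Type*} {l : Filter ι} [l.NeBot] {A : E → E}
    (hA : ∀ a b, ‖A a - A b‖ ≤ ‖a - b‖) {x : ι → E} {z : E} {R : ℝ} (hx : ∀ n, ‖x n‖ ≤ R)
    (hweak : ∀ u, Tendsto (fun n => ⟪x n, u⟫) l (𝓝 ⟪z, u⟫))
    (hres : Tendsto (fun n => x n - A (x n)) l (𝓝 0)) : A z = z := by
  set e := z - A z
  set r := fun n => x n - A (x n)
  have key : ∀ n, 2 * (⟪x n - z, e⟫ - ⟪x n - z, r n⟫) + ‖e - r n‖ ^ 2 ≤ 0 := fun n => by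
    have hn := hA (x n) z
    rw [show A (x n) - A z = (x n - z) + (e - r n) by simp only [e, r]; abel] at hn
    have hsq := pow_le_pow_left₀ (norm_nonneg _) hn 2
    rw [norm_add_sq_real, inner_sub_right] at hsq
    linarith
  have h₁ : Tendsto (fun n => ⟪x n - z, e⟫) l (𝓝 0) := by
    simpa [inner_sub_left] using (hweak e).sub_const ⟪z, e⟫
  have h₂ : Tendsto (fun n => ⟪x n - z, r n⟫) l (𝓝 0) := by
    refine squeeze_zero_norm (fun n => (norm_inner_le_norm _ _).trans
      (mul_le_mul_of_nonneg_right ((norm_sub_le _ _).trans (add_le_add (hx n) le_rfl))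
        (norm_nonneg _))) ?_
    simpa using (tendsto_zero_iff_norm_tendsto_zero.1 hres).const_mul (R + ‖z‖)
  have h₃ : Tendsto (fun n => ‖e - r n‖ ^ 2) l (𝓝 (‖e‖ ^ 2)) := by
    simpa using ((tendsto_const_nhds (x := e)).sub hres).norm.pow 2
  have hle : ‖e‖ ^ 2 ≤ 0 :=
    le_of_tendsto' (by simpa using ((h₁.sub h₂).const_mul 2).add h₃) key
  exact (sub_eq_zero.1 (norm_eq_zero.1 (pow_eq_zero_iff two_ne_zero |>.1
    (le_antisymm hle (sq_nonneg _))))).symm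

variable [CompleteSpace E]

/-- Banach–Alaoglu, transported to `E` by the Riesz isomorphism. -/
lemma exists_tendsto_inner_of_norm_le {ι : Type*} {x : ι → E} {R : ℝ} (hx : ∀ n, ‖x n‖ ≤ R)
    (U : Ultrafilter ι) : ∃ z : E, ∀ u, Tendsto (fun n => ⟪x n, u⟫) U (𝓝 ⟪z, u⟫) := by
  set ℓ : ι → WeakDual ℝ E := fun n => StrongDual.toWeakDual (InnerProductSpace.toDual ℝ E (x n))
  obtain ⟨ℓ₀, -, hℓ₀⟩ := (WeakDual.isCompact_closedBall (𝕜 := ℝ) (0 : StrongDual ℝ E) R)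
    |>.ultrafilter_le_nhds (U.map ℓ) (by
      rw [Ultrafilter.coe_map, le_principal_iff]
      exact Filter.mem_map.2 (Filter.univ_mem' fun n => by simpa [ℓ] using hx n))
  refine ⟨(InnerProductSpace.toDual ℝ E).symm (WeakDual.toStrongDual ℓ₀), fun u => ?_⟩
  have := ((WeakDual.eval_continuous u).tendsto ℓ₀).comp hℓ₀
  simpa [ℓ, Function.comp_def, InnerProductSpace.toDual_apply_apply] using this

/-- Opial's argument for Fejér monotone sequences. -/
lemma exists_tendsto_inner_of_fejer {x : ℕ → E} {C : Set E} (hC : C.Nonempty)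
    (hfejer : ∀ z ∈ C, Antitone fun n => ‖x n - z‖)
    (hclus : ∀ (U : Ultrafilter ℕ) (z : E), (U : Filter ℕ) ≤ atTop →
      (∀ u, Tendsto (fun n => ⟪x n, u⟫) U (𝓝 ⟪z, u⟫)) → z ∈ C) :
    ∃ z ∈ C, ∀ u, Tendsto (fun n => ⟪x n, u⟫) atTop (𝓝 ⟪z, u⟫) := by
  obtain ⟨c, hc⟩ := hC
  have hlim : ∀ U : Ultrafilter ℕ, (U : Filter ℕ) ≤ atTop →
      ∃ z ∈ C, ∀ u, Tendsto (fun n => ⟪x n, u⟫) U (𝓝 ⟪z, u⟫) := fun U hU => by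
    obtain ⟨z, hz⟩ := exists_tendsto_inner_of_norm_le (norm_le_of_antitone_norm_sub (hfejer c hc)) U
    exact ⟨z, hclus U z hU hz, hz⟩
  -- `⟪x n, z - z'⟫` is a combination of `‖x n - z‖²` and `‖x n - z'‖²`, which converge
  have hinner : ∀ z ∈ C, ∀ z' ∈ C, ∃ c, Tendsto (fun n => ⟪x n, z - z'⟫) atTop (𝓝 c) := by
    intro z hz z' hz'
    have hconv : ∀ y ∈ C, Tendsto (fun n => ‖x n - y‖) atTop (𝓝 (⨅ n, ‖x n - y‖)) :=
      fun y hy => tendsto_atTop_ciInf (hfejer y hy) ⟨0, by rintro _ ⟨n, rfl⟩; exact norm_nonneg _⟩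
    have e : ∀ n, ⟪x n, z - z'⟫ = (‖x n - z'‖ ^ 2 - ‖x n - z‖ ^ 2 + ‖z‖ ^ 2 - ‖z'‖ ^ 2) / 2 := by
      intro n
      rw [norm_sub_sq_real, norm_sub_sq_real, inner_sub_right]
      ring
    simp only [e]
    exact ⟨_, ((((hconv z' hz').pow 2).sub ((hconv z hz).pow 2)).add_const _ |>.sub_const _)
      |>.div_const 2⟩
  obtain ⟨z₀, hz₀C, hz₀⟩ := hlim (Ultrafilter.of atTop) (Ultrafilter.of_le _)
  refine ⟨z₀, hz₀C, fun u => (tendsto_iff_ultrafilter _ _ _).2 fun U hU => ?_⟩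
  obtain ⟨z, hzC, hz⟩ := hlim U hU
  obtain ⟨c, hc⟩ := hinner z hzC z₀ hz₀C
  have h₁ := tendsto_nhds_unique (hz (z - z₀)) (hc.mono_left hU)
  have h₂ := tendsto_nhds_unique (hz₀ (z - z₀)) (hc.mono_left (Ultrafilter.of_le _))
  have hzz : ‖z - z₀‖ ^ 2 = 0 := by
    rw [← real_inner_self_eq_norm_sq, inner_sub_left, h₁, h₂, sub_self]
  rw [← sub_eq_zero.1 (norm_eq_zero.1 (pow_eq_zero_iff two_ne_zero |>.1 hzz))]
  exact hz u

/-- Krasnosel'skiĭ–Mann. -/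
theorem Averaged.exists_tendsto_inner {A : E → E} {κ : ℝ} (hA : Averaged κ A) (hκ : 0 < κ)
    (hfix : ∃ z, A z = z) {x : ℕ → E} (hx : ∀ n, x (n + 1) = A (x n)) :
    ∃ z, A z = z ∧ ∀ u, Tendsto (fun n => ⟪x n, u⟫) atTop (𝓝 ⟪z, u⟫) := by
  have hstep : ∀ z, A z = z → ∀ n,
      ‖x (n + 1) - z‖ ^ 2 + κ * ‖x n - A (x n)‖ ^ 2 ≤ ‖x n - z‖ ^ 2 := by
    intro z hz n
    have := hA (x n) z
    rw [hz, sub_self, sub_zero] at this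
    rwa [hx n]
  have hfejer : ∀ z ∈ {z | A z = z}, Antitone fun n => ‖x n - z‖ := fun z hz =>
    antitone_nat_of_succ_le fun n => by
      have := hstep z hz n
      exact pow_le_pow_iff_left₀ (norm_nonneg _) (norm_nonneg _) two_ne_zero |>.1 (by nlinarith)
  obtain ⟨c, hc⟩ := hfix
  have hres : Tendsto (fun n => x n - A (x n)) atTop (𝓝 0) := by
    have hl := tendsto_atTop_ciInf (hfejer c hc) ⟨0, by rintro _ ⟨n, rfl⟩; exact norm_nonneg _⟩
    have hdiff : Tendsto (fun n => (‖x n - c‖ ^ 2 - ‖x (n + 1) - c‖ ^ 2) / κ) atTop (𝓝 0) := by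
      simpa using ((hl.pow 2).sub ((hl.pow 2).comp (tendsto_add_atTop_nat 1))).div_const κ
    have hsq : Tendsto (fun n => ‖x n - A (x n)‖ ^ 2) atTop (𝓝 0) :=
      squeeze_zero (fun n => sq_nonneg _)
        (fun n => by rw [le_div_iff₀ hκ]; linarith [hstep c hc n]) hdiff
    rw [tendsto_zero_iff_norm_tendsto_zero]
    simpa [Real.sqrt_sq (norm_nonneg _)] using hsq.sqrt
  obtain ⟨z, hz, hconv⟩ := exists_tendsto_inner_of_fejer (C := {z | A z = z}) ⟨c, hc⟩ hfejer
    fun U z hU hz =>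
    eq_of_tendsto_inner_of_tendsto_sub (hA.norm_sub_le hκ.le)
      (norm_le_of_antitone_norm_sub (hfejer c hc)) hz (hres.mono_left hU)
  exact ⟨z, hz, hconv⟩

end WeakConvergence

section Prox

variable {E : Type*} [NormedAddCommGroup E] {g : E → EReal} {P : E → E}

namespace IsProx

lemma coe_toReal (hP : IsProx g P) (hg : ProperFn g) (x : E) :
    (((g (P x)).toReal : ℝ) : EReal) = g (P x) := by
  refine EReal.coe_toReal (fun htop => ?_) (hg.1 _)
  obtain ⟨z, hz⟩ := hg.2
  have hmin := (hP x).1 z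
  rw [htop, QK, EReal.top_add_coe, top_le_iff] at hmin
  exact (EReal.add_lt_top hz (EReal.coe_ne_top _)).ne hmin

lemma menv_eq (hP : IsProx g P) (hg : ProperFn g) (x : E) :
    menv g x = (((g (P x)).toReal + ‖x - P x‖ ^ 2 / 2 : ℝ) : EReal) := by
  rw [EReal.coe_add, hP.coe_toReal hg]
  exact le_antisymm (iInf_le _ (P x)) (le_iInf (hP x).1)

variable [InnerProductSpace ℝ E]

lemma inner_add_le (hP : IsProx g P) (hg : Gamma0 g) (x z : E) :
    ((⟪x - P x, z - P x⟫ : ℝ) : EReal) + g (P x) ≤ g z := by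
  rw [← hP.coe_toReal hg.1]
  set r := (g (P x)).toReal
  induction hz : g z using EReal.rec with
  | bot => exact absurd hz (hg.1.1 z)
  | top => exact le_top
  | coe s =>
    -- moving from `P x` towards `z` by `τ` cannot decrease `g + Q(x - ·)`
    have hτ : ∀ τ ∈ Set.Ioc (0 : ℝ) 1,
        ⟪x - P x, z - P x⟫ - (s - r) ≤ τ * (‖z - P x‖ ^ 2 / 2) := by
      intro τ hτ
      have hconv := hg.2.2 (P x) z (1 - τ) τ (by linarith [hτ.2]) hτ.1.le (by ring)
      have hmin := ((hP x).1 ((1 - τ) • P x + τ • z)).trans (add_le_add hconv le_rfl)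
      have hq : ‖x - ((1 - τ) • P x + τ • z)‖ ^ 2
          = ‖x - P x‖ ^ 2 - 2 * τ * ⟪x - P x, z - P x⟫ + τ ^ 2 * ‖z - P x‖ ^ 2 := by
        rw [show x - ((1 - τ) • P x + τ • z) = (x - P x) - τ • (z - P x) by module,
          norm_sub_sq_real, norm_smul, real_inner_smul_right, Real.norm_of_nonneg hτ.1.le]
        ring
      rw [hz, ← hP.coe_toReal hg.1, QK, QK, ← EReal.coe_mul, ← EReal.coe_mul, ← EReal.coe_add,
        ← EReal.coe_add, ← EReal.coe_add, EReal.coe_le_coe_iff, hq] at hmin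
      have : τ * (⟪x - P x, z - P x⟫ - (s - r)) ≤ τ * (τ * (‖z - P x‖ ^ 2 / 2)) := by nlinarith
      exact le_of_mul_le_mul_left this hτ.1
    have hlim : Tendsto (fun τ : ℝ => τ * (‖z - P x‖ ^ 2 / 2)) (𝓝[>] 0) (𝓝 0) :=
      ((continuous_mul_const _).tendsto' 0 0 (zero_mul _)).mono_left nhdsWithin_le_nhds
    have := ge_of_tendsto hlim (Filter.eventually_of_mem (Ioc_mem_nhdsGT zero_lt_one) hτ)
    rw [← EReal.coe_add, EReal.coe_le_coe_iff]
    linarith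

lemma smoothConvex (hP : IsProx g P) (hg : Gamma0 g) :
    SmoothConvex 1 (fun x => (g (P x)).toReal + ‖x - P x‖ ^ 2 / 2) (fun x => x - P x) := by
  intro a b
  have hr : ∀ x, g (P x) = (((g (P x)).toReal : ℝ) : EReal) := fun x => (hP.coe_toReal hg.1 x).symm
  constructor
  · have hvi := hP.inner_add_le hg a (P b)
    rw [hr a, hr b, ← EReal.coe_add, EReal.coe_le_coe_iff] at hvi
    have e : ⟪a - P a, P b - P a⟫ = ⟪a - P a, b - a⟫ - ⟪a - P a, b - P b⟫ + ‖a - P a‖ ^ 2 := by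
      rw [← real_inner_self_eq_norm_sq, ← inner_sub_right, ← inner_add_right]
      congr 1
      abel
    nlinarith [norm_sub_sq_real (a - P a) (b - P b), sq_nonneg ‖(a - P a) - (b - P b)‖]
  · have hmin := (hP b).1 (P a)
    rw [hr a, hr b, QK, QK, ← EReal.coe_add, ← EReal.coe_add, EReal.coe_le_coe_iff,
      show b - P a = (a - P a) + (b - a) by abel, norm_add_sq_real] at hmin
    linarith

end IsProx

end Prox

section InverseEnvelope

variable {E : Type*} [NormedAddCommGroup E] [InnerProductSpace ℝ E]

/-- `(φ* - Q)*`. It inverts the Moreau envelope: `menvInv (menv h) = h` for `h ∈ Γ₀`. -/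
def menvInv (φ : E → EReal) : E → EReal := fconj (fun u => fconj φ u - QK u)

namespace SmoothConvex

variable {β : ℝ} {φ : E → ℝ} {D : E → E}

lemma mem_subdiff (h : SmoothConvex β φ D) (y : E) : D y ∈ subdiff (fun x => (φ x : EReal)) y :=
  fun z => by
    rw [← EReal.coe_add, EReal.coe_le_coe_iff, real_inner_comm]
    linarith [(h y z).1]

lemma fconj_apply (h : SmoothConvex β φ D) (y : E) :
    fconj (fun x => (φ x : EReal)) (D y) = ((⟪y, D y⟫ - φ y : ℝ) : EReal) :=
  fconj_eq_of_mem_subdiff (F := fun x => (φ x : EReal)) rfl (h.mem_subdiff y)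

lemma le_fconj (h : SmoothConvex 1 φ D) (y v : E) :
    ((⟪y, v⟫ - φ y + ‖v - D y‖ ^ 2 / 2 : ℝ) : EReal) ≤ fconj (fun x => (φ x : EReal)) v := by
  refine le_iSup_of_le (y + (v - D y)) ?_
  rw [← EReal.coe_sub, EReal.coe_le_coe_iff]
  have hup := (h y (y + (v - D y))).2
  rw [add_sub_cancel_left] at hup
  have e : ⟪y + (v - D y), v⟫ = ⟪y, v⟫ + ⟪D y, v - D y⟫ + ‖v - D y‖ ^ 2 := by
    rw [norm_sub_sq_real, inner_add_left, inner_sub_left, inner_sub_right,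
      real_inner_self_eq_norm_sq, real_inner_self_eq_norm_sq, real_inner_comm v (D y)]
    ring
  linarith

lemma sub_mem_subdiff_fconj_sub_QK (h : SmoothConvex 1 φ D) (y : E) :
    y - D y ∈ subdiff (fun u => fconj (fun x => (φ x : EReal)) u - QK u) (D y) := by
  intro v
  dsimp only
  rw [h.fconj_apply, QK, QK, ← EReal.coe_sub, ← EReal.coe_add]
  refine le_trans (le_of_eq ?_) (EReal.sub_le_sub (h.le_fconj y v) le_rfl)
  rw [← EReal.coe_sub]
  congr 1
  rw [norm_sub_sq_real, inner_sub_left, inner_sub_right, inner_sub_right,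
    real_inner_self_eq_norm_sq, real_inner_comm y v, real_inner_comm (D y) v,
    real_inner_comm y (D y)]
  ring

lemma menvInv_apply_sub (h : SmoothConvex 1 φ D) (y : E) :
    menvInv (fun x => (φ x : EReal)) (y - D y) = ((φ y - ‖D y‖ ^ 2 / 2 : ℝ) : EReal) := by
  rw [menvInv, fconj_eq_of_mem_subdiff (m := ⟪y, D y⟫ - φ y - ‖D y‖ ^ 2 / 2) ?_
    (h.sub_mem_subdiff_fconj_sub_QK y)]
  · congr 1
    rw [inner_sub_right, real_inner_self_eq_norm_sq, real_inner_comm]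
    ring
  · rw [h.fconj_apply, QK, ← EReal.coe_sub]

/-- `Id - D` is the proximity operator of `menvInv φ`. -/
lemma mem_subdiff_menvInv (h : SmoothConvex 1 φ D) (y : E) :
    D y ∈ subdiff (menvInv fun x => (φ x : EReal)) (y - D y) :=
  mem_subdiff_fconj (m := ⟪y, D y⟫ - φ y - ‖D y‖ ^ 2 / 2)
    (by rw [h.fconj_apply, QK, ← EReal.coe_sub])
    (h.sub_mem_subdiff_fconj_sub_QK y)

end SmoothConvex

end InverseEnvelope

section Comixture

variable (L : ∀ k, H →L[ℝ] G k) (g : ∀ k, G k → EReal) (α : Fin p → ℝ) (P : ∀ k, G k → G k)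

/-- `∑ α_k (g_k □ Q) ∘ L_k`, evaluated through the proximity operators `P k`. -/
def envSum (x : H) : ℝ :=
  ∑ k, α k * ((g k (P k (L k x))).toReal + ‖L k x - P k (L k x)‖ ^ 2 / 2)

def envSumGrad [CompleteSpace H] [∀ k, CompleteSpace (G k)] (x : H) : H :=
  ∑ k, α k • ContinuousLinearMap.adjoint (L k) (L k x - P k (L k x))

variable {L g α P}

lemma smoothConvex_envSum [CompleteSpace H] [∀ k, CompleteSpace (G k)]
    (hg : ∀ k, Gamma0 (g k)) (hP : ∀ k, IsProx (g k) (P k)) (hL : ∀ k, ‖L k‖ ≤ 1)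
    (hα : ∀ k, 0 ≤ α k) (hαsum : ∑ k, α k = 1) :
    SmoothConvex 1 (envSum L g α P) (envSumGrad L α P) := by
  have := SmoothConvex.sum Finset.univ (fun k _ => hα k)
    fun k _ => ((hP k).smoothConvex (hg k)).comp_clm zero_le_one (hL k)
  rwa [hαsum, mul_one] at this

lemma comix_eq_menvInv_envSum (hg : ∀ k, Gamma0 (g k)) (hP : ∀ k, IsProx (g k) (P k)) :
    comix L g α = menvInv fun x => (envSum L g α P x : EReal) := by
  have hΦ : (fun x => ∑ k, (α k : EReal) * menv (g k) (L k x))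
      = fun x => (envSum L g α P x : EReal) := by
    funext x
    simp only [envSum, (hP _).menv_eq (hg _).1, ← EReal.coe_mul, EReal.coe_finset_sum]
  rw [comix, hΦ, menvInv]

end Comixture

/-- Proposition 4.3 (forward–backward): if `f` is convex and differentiable with a
`β`-Lipschitzian gradient, `β ∈ (0,2)`, the forward–backward iteration applied to `f` and
`h = comix(L_k,g_k)` converges weakly to a minimizer of `f + h`. -/
theorem forwardBackward_comix [CompleteSpace H] [∀ k, CompleteSpace (G k)]
    (L : ∀ k, H →L[ℝ] G k) (g : ∀ k, (G k) → EReal) (α : Fin p → ℝ)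
    (hg : ∀ k, Gamma0 (g k)) (hL : ∀ k, ‖L k‖ ≤ 1)
    (hα : ∀ k, α k ∈ Set.Ioc (0 : ℝ) 1) (hαsum : ∑ k, α k = 1)
    (f : H → ℝ) (hfconv : ConvexOn ℝ Set.univ f)
    (f' : H → H) (hf' : ∀ x : H, HasGradientAt f (f' x) x)
    (β : ℝ) (hβ : β ∈ Set.Ioo (0 : ℝ) 2)
    (hlip : ∀ x y : H, ‖f' x - f' y‖ ≤ β * ‖x - y‖)
    (hsol : ∃ xs : H, ∀ w : H,
      ((f xs : ℝ) : EReal) + comix L g α xs ≤ ((f w : ℝ) : EReal) + comix L g α w)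
    (P : ∀ k, G k → G k) (hP : ∀ k, IsProx (g k) (P k))
    (x y : ℕ → H)
    (hy : ∀ n, y n = x n - f' (x n))
    (hx : ∀ n, x (n + 1) = y n + ∑ k, α k •
      (ContinuousLinearMap.adjoint (L k)) (P k (L k (y n)) - L k (y n))) :
    ∃ xbar : H,
      (∀ w : H, ((f xbar : ℝ) : EReal) + comix L g α xbar ≤
        ((f w : ℝ) : EReal) + comix L g α w) ∧
      ∀ u : H, Tendsto (fun n => (⟪x n, u⟫ : ℝ)) atTop (nhds (⟪xbar, u⟫ : ℝ)) := by
  set D := envSumGrad L α P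
  have hφ := smoothConvex_envSum hg hP hL (fun k => (hα k).1.le) hαsum
  have hfix : ∀ z, z - f' z - D (z - f' z) = z ↔
      ∀ w, (f z : EReal) + comix L g α z ≤ f w + comix L g α w := fun z => by
    rw [comix_eq_menvInv_envSum hg hP]
    exact forwardBackward_eq_self_iff (h := menvInv fun x => (envSum L g α P x : EReal))
      (T := fun y => y - D y) hfconv hf' (convexFnE_fconj _)
      (fun y => ⟨_, hφ.menvInv_apply_sub y⟩) (fun y => by simpa using hφ.mem_subdiff_menvInv y) z
  have hiter : ∀ n, x (n + 1) = ((fun y => y - D y) ∘ fun x => x - f' x) (x n) := fun n => by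
    rw [hx n, hy n, Function.comp_apply, sub_eq_add_neg _ (D _)]
    simp only [D, envSumGrad, ← Finset.sum_neg_distrib, ← smul_neg, ← map_neg, neg_sub]
  have hS := ((SmoothConvex.of_convexOn hfconv hf' hlip).cocoercive hβ.1).averaged_id_sub
  have hT := (hφ.cocoercive one_pos).averaged_id_sub
  have hs : 0 < 2 * β⁻¹ - 1 := by
    have : 1 < 2 * β⁻¹ := by rw [← div_eq_mul_inv, one_lt_div hβ.1]; exact hβ.2
    linarith
  obtain ⟨xs, hxs⟩ := hsol
  obtain ⟨z, hz, hconv⟩ := (hS.comp hT hs (by norm_num)).exists_tendsto_inner (by positivity)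
    ⟨xs, (hfix xs).2 hxs⟩ hiter
  exact ⟨z, (hfix z).1 hz, hconv⟩

end
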